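/- Let p, q, r be pairwise distinct sentential variables and let G be the class of weighting functions g with g(q) > g(p) and g(q) > g(r). Then O(p∨q) ∧ ¬q ⊨_G Op, i.e., ⟦O(p∨q) ∧ ¬q⟧_M ⊆ ⟦Op⟧_M for every g∈G, every g-based selection function S, and every Δ model M whose selection function is S. -/

import Mathlib

/-- Formulas of the preference language L, generated from sentential
variables by negation, conjunction, and the binary connective ⪰. -/
inductive Fml (α : Type) : Type where
  | var : α → Fml α
  | neg : Fml α → Fml α
  | conj : Fml α → Fml α → Fml α
  | succeq : Fml α → Fml α → Fml α

namespace Fml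

variable {α : Type}

/-- φ∨ψ := ¬(¬φ∧¬ψ) -/
def disj (φ ψ : Fml α) : Fml α := neg (conj (neg φ) (neg ψ))
/-- φ→ψ := ¬φ∨ψ -/
def impl (φ ψ : Fml α) : Fml α := disj (neg φ) ψ
/-- φ↔ψ := (φ→ψ)∧(ψ→φ) -/
def iffF (φ ψ : Fml α) : Fml α := conj (impl φ ψ) (impl ψ φ)
/-- φ≻ψ := (φ⪰ψ)∧¬(ψ⪰φ) -/
def succ (φ ψ : Fml α) : Fml α := conj (succeq φ ψ) (neg (succeq ψ φ))
/-- ⊤ := p→p for a fixed variable p -/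
def topF (p : α) : Fml α := impl (var p) (var p)
/-- ⊥ := ¬⊤ -/
def botF (p : α) : Fml α := neg (topF p)
/-- ◻φ := ¬(¬φ⪰¬φ) -/
def box (φ : Fml α) : Fml α := neg (succeq (neg φ) (neg φ))
/-- ◇φ := φ⪰φ -/
def dia (φ : Fml α) : Fml α := succeq φ φ
/-- Conditional obligation C(φ,ψ) := (φ∧ψ) ≻ (φ∧¬ψ) -/
def Cond (φ ψ : Fml α) : Fml α := succ (conj φ ψ) (conj φ (neg ψ))
/-- Obligation Oψ := C(⊤,ψ), where ⊤ uses the fixed variable p -/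
def Ob (p : α) (ψ : Fml α) : Fml α := Cond (topF p) ψ
/-- Permission Pψ := ¬O¬ψ -/
def Perm (p : α) (ψ : Fml α) : Fml α := neg (Ob p (neg ψ))

end Fml

/-- A model (W,S,U,T): a nonempty set of worlds, a selection function
picking a member of each nonempty set of worlds, a real-valued utility
function, and a truth-assignment. -/
structure Model (α : Type) : Type 1 where
  W : Type
  nonempty : Nonempty W
  S : W → Set W → W
  S_mem : ∀ (w : W) (A : Set W), A.Nonempty → S w A ∈ A
  U : W → ℝ
  T : α → Set W

open Classical in
/-- The proposition ⟦φ⟧_M expressed by φ in the model M. -/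
noncomputable def sat {α : Type} (M : Model α) : Fml α → Set M.W
  | .var p => M.T p
  | .neg θ => (sat M θ)ᶜ
  | .conj θ ψ => sat M θ ∩ sat M ψ
  | .succeq θ ψ =>
      if sat M θ = ∅ ∨ sat M ψ = ∅ then ∅
      else {w | M.U (M.S w (sat M θ)) ≥ M.U (M.S w (sat M ψ))}

/-- φ ⊨ ψ : in every model, ⟦φ⟧ ⊆ ⟦ψ⟧. -/
def Implies {α : Type} (φ ψ : Fml α) : Prop :=
  ∀ M : Model α, sat M φ ⊆ sat M ψ

/-- ⊨ φ : in every model, ⟦φ⟧ = W. -/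
def Valid {α : Type} (φ : Fml α) : Prop :=
  ∀ M : Model α, sat M φ = Set.univ

/-- S is a selection function on W = 𝒫(Props): for each world w and
nonempty set A of worlds, S w A ∈ A. -/
def IsSelection {α : Type} (S : Set α → Set (Set α) → Set α) : Prop :=
  ∀ (w : Set α) (A : Set (Set α)), A.Nonempty → S w A ∈ A

/-- S is Δ-based: no w₁ ∈ A has w Δ w₁ properly included in w Δ S(w,A). -/
def DeltaBased {α : Type} (S : Set α → Set (Set α) → Set α) : Prop :=
  ∀ (w : Set α) (A : Set (Set α)), A.Nonempty →
    ¬ ∃ w1 ∈ A, symmDiff w w1 ⊂ symmDiff w (S w A)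

/-- A Δ model: W = 𝒫(Props), T(p) = {w | p ∈ w}, and a Δ-based
selection function. -/
structure DeltaModel (α : Type) : Type where
  S : Set α → Set (Set α) → Set α
  S_mem : ∀ (w : Set α) (A : Set (Set α)), A.Nonempty → S w A ∈ A
  delta : DeltaBased S
  U : Set α → ℝ

/-- The underlying model of a Δ model. -/
def DeltaModel.toModel {α : Type} (M : DeltaModel α) : Model α where
  W := Set α
  nonempty := ⟨∅⟩
  S := M.S
  S_mem := M.S_mem
  U := M.U
  T := fun p => {w : Set α | p ∈ w}

/-- φ ⊨_Δ ψ : in every Δ model, ⟦φ⟧ ⊆ ⟦ψ⟧. -/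
def DeltaImplies {α : Type} (φ ψ : Fml α) : Prop :=
  ∀ M : DeltaModel α, sat M.toModel φ ⊆ sat M.toModel ψ

/-- The g-distance between two worlds: the (possibly infinite) sum of the
weights of the variables in their symmetric difference. -/
noncomputable def gdist {α : Type} (g : α → ℝ) (w0 w1 : Set α) : ENNReal :=
  ∑' v : ↥(symmDiff w0 w1), ENNReal.ofReal (g v)

/-- S is g-based: no w' ∈ A is strictly g-closer to w than S(w,A). -/
def GBased {α : Type} (g : α → ℝ) (S : Set α → Set (Set α) → Set α) : Prop :=
  ∀ (w : Set α) (A : Set (Set α)), A.Nonempty →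
    ¬ ∃ w' ∈ A, gdist g w w' < gdist g w (S w A)


/-!
A `g`-based selection function picks the world itself when it is available, and otherwise
the world obtained by toggling a single variable `x` whenever every candidate must disagree
with the current world on `x`. At a world `w` with `q ∉ w`, this makes the closest
`p ∨ q`-world coincide with the closest `p`-world (if `p ∉ w`, reaching a `q`-world costs at
least `g q > g p`), and the closest `¬(p ∨ q)`-world coincide with the closest `¬p`-world.
So `O(p ∨ q)` and `Op` compare the same two utilities at `w`.
-/

open scoped symmDiff

section Semantics

variable {α : Type} (M : Model α)

theorem sat_topF (p0 : α) : sat M (Fml.topF p0) = Set.univ := by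
  ext v
  simp only [sat, Fml.topF, Fml.impl, Fml.disj, Set.mem_compl_iff, Set.mem_inter_iff,
    Set.mem_univ, iff_true, not_and, not_not]
  exact id

theorem sat_disj (φ ψ : Fml α) : sat M (Fml.disj φ ψ) = sat M φ ∪ sat M ψ := by
  simp only [sat, Fml.disj, Set.compl_inter, compl_compl]

theorem mem_sat_succeq_iff (φ ψ : Fml α) (w : M.W) :
    w ∈ sat M (.succeq φ ψ) ↔
      (sat M φ).Nonempty ∧ (sat M ψ).Nonempty ∧
        M.U (M.S w (sat M ψ)) ≤ M.U (M.S w (sat M φ)) := by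
  simp only [sat, Set.nonempty_iff_ne_empty]
  split_ifs with h <;> simp only [Set.mem_empty_iff_false, Set.mem_ofPred_eq, ge_iff_le] <;> tauto

theorem mem_sat_Ob_iff (p0 : α) (ψ : Fml α) (w : M.W) :
    w ∈ sat M (Fml.Ob p0 ψ) ↔
      (sat M ψ).Nonempty ∧ (sat M ψ)ᶜ.Nonempty ∧
        M.U (M.S w (sat M ψ)ᶜ) < M.U (M.S w (sat M ψ)) := by
  change w ∈ sat M (.succeq _ _) ∩ (sat M (.succeq _ _))ᶜ ↔ _
  rw [Set.mem_inter_iff, Set.mem_compl_iff, mem_sat_succeq_iff, mem_sat_succeq_iff]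
  simp only [sat, sat_topF, Set.univ_inter, not_and, not_le]
  exact ⟨fun ⟨⟨h1, h2, _⟩, h⟩ => ⟨h1, h2, h h2 h1⟩,
    fun ⟨h1, h2, h⟩ => ⟨⟨h1, h2, h.le⟩, fun _ _ => h⟩⟩

theorem DeltaModel.sat_var (M : DeltaModel α) (p : α) :
    sat M.toModel (.var p) = ({v | p ∈ v} : Set (Set α)) :=
  rfl

theorem DeltaModel.mem_sat_Ob_iff_of_sat_eq (M : DeltaModel α) (p0 : α) {ψ : Fml α}
    {A : Set (Set α)} (hA : sat M.toModel ψ = A) (w : Set α) :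
    w ∈ sat M.toModel (Fml.Ob p0 ψ) ↔
      A.Nonempty ∧ Aᶜ.Nonempty ∧ M.U (M.S w Aᶜ) < M.U (M.S w A) :=
  hA ▸ mem_sat_Ob_iff M.toModel p0 ψ w

end Semantics

section Distance

variable {α : Type} {g : α → ℝ} {w v : Set α} {x : α}

theorem ofReal_le_gdist (hx : x ∈ w ∆ v) : ENNReal.ofReal (g x) ≤ gdist g w v :=
  ENNReal.le_tsum (⟨x, hx⟩ : ↥(w ∆ v))

theorem gdist_self (w : Set α) : gdist g w w = 0 := by
  simp [gdist, symmDiff_self, Set.bot_eq_empty]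

theorem gdist_pos (hg : ∀ v, 0 < g v) (h : v ≠ w) : 0 < gdist g w v := by
  obtain ⟨x, hx⟩ : (w ∆ v).Nonempty :=
    Set.nonempty_iff_ne_empty.mpr fun he => h (symmDiff_eq_bot.mp he).symm
  exact (ENNReal.ofReal_pos.mpr (hg x)).trans_le (ofReal_le_gdist hx)

theorem gdist_symmDiff_singleton (w : Set α) (x : α) :
    gdist g w (w ∆ {x}) = ENNReal.ofReal (g x) := by
  rw [gdist, symmDiff_symmDiff_cancel_left]
  exact tsum_singleton x fun y => ENNReal.ofReal (g y)

/-- Any other world that also disagrees with `w` on `x` disagrees on a second variable too. -/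
theorem gdist_symmDiff_singleton_lt (hg : ∀ v, 0 < g v) (hx : x ∈ w ∆ v)
    (hv : v ≠ w ∆ {x}) : gdist g w (w ∆ {x}) < gdist g w v := by
  classical
  obtain ⟨y, hy, hyx⟩ : ∃ y ∈ w ∆ v, y ≠ x := by
    by_contra! h
    refine hv (symmDiff_right_injective w ?_)
    simp only [symmDiff_symmDiff_cancel_left]
    exact Set.eq_singleton_iff_unique_mem.mpr ⟨hx, h⟩
  have hpair := ENNReal.sum_le_tsum (f := fun z : ↥(w ∆ v) => ENNReal.ofReal (g z))
    ({⟨x, hx⟩, ⟨y, hy⟩} : Finset ↥(w ∆ v))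
  rw [Finset.sum_pair fun h => hyx (congrArg Subtype.val h).symm] at hpair
  rw [gdist_symmDiff_singleton]
  exact (ENNReal.lt_add_right ENNReal.ofReal_ne_top
    (ENNReal.ofReal_pos.mpr (hg y)).ne').trans_le hpair

end Distance

namespace GBased

variable {α : Type} {g : α → ℝ} {S : Set α → Set (Set α) → Set α} {w c : Set α}
  {A : Set (Set α)} {x : α}

theorem eq_of_forall_gdist_lt (hgb : GBased g S) (hS : IsSelection S) (hc : c ∈ A)
    (h : ∀ v ∈ A, v ≠ c → gdist g w c < gdist g w v) : S w A = c := by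
  by_contra hne
  exact hgb w A ⟨c, hc⟩ ⟨c, hc, h _ (hS w A ⟨c, hc⟩) hne⟩

theorem eq_self (hgb : GBased g S) (hS : IsSelection S) (hg : ∀ v, 0 < g v) (hw : w ∈ A) :
    S w A = w :=
  hgb.eq_of_forall_gdist_lt hS hw fun _ _ hv => gdist_self (g := g) w ▸ gdist_pos hg hv

theorem eq_symmDiff_singleton (hgb : GBased g S) (hS : IsSelection S) (hg : ∀ v, 0 < g v)
    (hc : w ∆ {x} ∈ A) (h : ∀ v ∈ A, x ∈ w ∆ v) : S w A = w ∆ {x} :=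
  hgb.eq_of_forall_gdist_lt hS hc fun v hv hne => gdist_symmDiff_singleton_lt hg (h v hv) hne

variable {p q : α}

theorem sel_union_eq (hgb : GBased g S) (hS : IsSelection S) (hg : ∀ v, 0 < g v)
    (hgp : g p < g q) (hq : q ∉ w) :
    S w ({v | p ∈ v} ∪ {v | q ∈ v}) = S w {v | p ∈ v} := by
  by_cases hp : p ∈ w
  · rw [hgb.eq_self hS hg (Or.inl hp), hgb.eq_self hS hg hp]
  have hpc : p ∈ w ∆ {p} := by simp [Set.mem_symmDiff, hp]
  have hsel : S w {v | p ∈ v} = w ∆ {p} :=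
    hgb.eq_symmDiff_singleton hS hg hpc fun v hv => by simp_all [Set.mem_symmDiff]
  rw [hsel]
  refine hgb.eq_of_forall_gdist_lt hS (Or.inl hpc) fun v hv hne => ?_
  by_cases hpv : p ∈ v
  · exact gdist_symmDiff_singleton_lt hg (by simp [Set.mem_symmDiff, hp, hpv]) hne
  have hqv : q ∈ w ∆ v := by simp_all [Set.mem_symmDiff]
  rw [gdist_symmDiff_singleton]
  exact ((ENNReal.ofReal_lt_ofReal_iff ((hg p).trans hgp)).mpr hgp).trans_le
    (ofReal_le_gdist hqv)

theorem sel_compl_union_eq (hgb : GBased g S) (hS : IsSelection S) (hg : ∀ v, 0 < g v)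
    (hq : q ∉ w) :
    S w ({v | p ∈ v} ∪ {v | q ∈ v})ᶜ = S w {v | p ∈ v}ᶜ := by
  by_cases hp : p ∈ w
  · have hpc : w ∆ {p} ∈ ({v | p ∈ v} ∪ {v | q ∈ v})ᶜ := by
      simp [Set.mem_symmDiff, hp, hq, (ne_of_mem_of_not_mem hp hq).symm]
    rw [hgb.eq_symmDiff_singleton hS hg hpc fun v hv => by simp_all [Set.mem_symmDiff],
      hgb.eq_symmDiff_singleton (x := p) hS hg (by simp [Set.mem_symmDiff, hp])
        fun v hv => by simp_all [Set.mem_symmDiff]]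
  · rw [hgb.eq_self hS hg (by simp [hp, hq]), hgb.eq_self hS hg hp]

end GBased

open Fml in
theorem stmt_17_general {α : Type} (p q : α)
    (p0 : α) (g : α → ℝ) (hg : ∀ v, 0 < g v) (hgp : g q > g p)
    (M : DeltaModel α) (hgb : GBased g M.S) :
    sat M.toModel (conj (Ob p0 (disj (var p) (var q))) (neg (var q)))
      ⊆ sat M.toModel (Ob p0 (var p)) := by
  rintro w ⟨hO, hq⟩
  have hor : sat M.toModel (disj (var p) (var q))
      = ({v | p ∈ v} ∪ {v | q ∈ v} : Set (Set α)) := sat_disj _ _ _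
  obtain ⟨-, -, hU⟩ := (M.mem_sat_Ob_iff_of_sat_eq p0 hor w).mp hO
  refine (M.mem_sat_Ob_iff_of_sat_eq p0 (M.sat_var p) w).mpr ⟨⟨{p}, rfl⟩, ⟨∅, id⟩, ?_⟩
  rwa [← hgb.sel_union_eq M.S_mem hg hgp hq, ← hgb.sel_compl_union_eq M.S_mem hg hq]

open Fml in
theorem stmt_17 {α : Type} (p q r : α) (hpq : p ≠ q) (hpr : p ≠ r) (hqr : q ≠ r)
    (p0 : α) (g : α → ℝ) (hg : ∀ v, 0 < g v) (hgp : g q > g p) (hgr : g q > g r)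
    (M : DeltaModel α) (hgb : GBased g M.S) :
    sat M.toModel (conj (Ob p0 (disj (var p) (var q))) (neg (var q)))
      ⊆ sat M.toModel (Ob p0 (var p)) :=
  stmt_17_general p q p0 g hg hgp M hgb
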